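/- A nonempty computably enumerable set B is disjoint from an infinite computable set if and only if there is a computable permutation π of ℕ with π(A) = B for some self-constructing set A. -/

import Mathlib

/-!
(⇒) Remove from `E` an infinite computable subset `D` with `E \ D` infinite; then `C = Dᶜ` is
computable, infinite, coinfinite and contains `B`. By the recursion theorem with parameters there
is a code `c` whose curried instances `g n = ⌜curry c n⌝` all enumerate the same set
`A = {g k | (k-th element of C) ∈ B}`, so `A` is self-constructing. The range of `g` is computable,
infinite and coinfinite, so matching the `k`-th elements of `range g` and of `C` (and of their
complements) is a computable permutation carrying `A` onto `B`.

(⇐) The codes `⌜curry c n⌝` of the nowhere defined function form an infinite computable set of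
indices of `∅`, which a nonempty self-constructing set cannot meet; its image under `π` is disjoint
from `π '' A = B`.
-/

/-- The e-th partial computable function in a standard numbering. -/
def phi (e : ℕ) : ℕ →. ℕ :=
  Nat.Partrec.Code.eval (Denumerable.ofNat Nat.Partrec.Code e)

/-- W e is the domain of the e-th partial computable function. -/
def W (e : ℕ) : Set ℕ := (phi e).Dom


/-- A set is computably enumerable iff it is W e for some e. -/
def CE (A : Set ℕ) : Prop := ∃ e, W e = A

/-- A nonempty c.e. set A is self-constructing if W e = A for every e ∈ A. -/
def SelfConstructing (A : Set ℕ) : Prop :=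
  A.Nonempty ∧ CE A ∧ ∀ e ∈ A, W e = A

open Nat (count nth)
open Nat.Partrec (Code)
open Nat.Partrec.Code
open Encodable (encode)

noncomputable def nthTransfer (p q : ℕ → Prop) [DecidablePred p] [DecidablePred q] (x : ℕ) : ℕ :=
  if p x then nth q (count p x) else nth (¬q ·) (count (¬p ·) x)

section CountNth

variable {p q : ℕ → Prop} [DecidablePred p] [DecidablePred q]

theorem ComputablePred.computable_count (hp : ComputablePred p) : Computable (count p) := by
  have hstep : Computable₂ fun (_ : ℕ) (s : ℕ × ℕ) => s.2 + if p s.1 then 1 else 0 :=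
    (Primrec.nat_add.to_comp.comp (Computable.snd.comp Computable.snd)
      (ComputablePred.ite (Computable.const 1) (Computable.const 0) hp |>.comp
        (Computable.fst.comp Computable.snd))).to₂
  refine (Computable.nat_rec Computable.id (Computable.const 0) hstep).of_eq fun n => ?_
  induction n with
  | zero => rfl
  | succ n ih => simp [Nat.count_succ, ← ih]

theorem ComputablePred.computable_nth (hp : ComputablePred p) (hinf : (Set.ofPred p).Infinite) :
    Computable (nth p) := by
  have hex : ∀ k, ∃ n, p n ∧ count p n = k := fun k =>
    ⟨nth p k, Nat.nth_mem_of_infinite hinf k, Nat.count_nth_of_infinite hinf k⟩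
  have hfind : Computable fun k => Nat.find (hex k) := by
    refine Computable.find (Computable.computablePred ?_) hex
    simpa only [Bool.decide_and] using Primrec.and.to_comp.comp (hp.decide.comp Computable.snd)
      (Primrec.eq.decide.to_comp.comp (hp.computable_count.comp Computable.snd) Computable.fst)
  refine hfind.of_eq fun k => ?_
  obtain ⟨hmem, hcount⟩ := Nat.find_spec (hex k)
  rw [← Nat.nth_count hmem, hcount]

theorem nthTransfer_nth (hp : (Set.ofPred p).Infinite) (k : ℕ) :
    nthTransfer p q (nth p k) = nth q k := by
  simp [nthTransfer, Nat.nth_mem_of_infinite hp, Nat.count_nth_of_infinite hp]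

theorem nthTransfer_nthTransfer (hq : (Set.ofPred q).Infinite)
    (hq' : (Set.ofPred fun x => ¬q x).Infinite) (x : ℕ) :
    nthTransfer q p (nthTransfer p q x) = x := by
  by_cases hx : p x
  · simp [nthTransfer, hx, Nat.nth_mem_of_infinite hq, Nat.count_nth_of_infinite hq,
      Nat.nth_count hx]
  · have := Nat.nth_mem_of_infinite hq' (count (¬p ·) x)
    simp [nthTransfer, hx, this, Nat.count_nth_of_infinite hq', Nat.nth_count (p := (¬p ·)) hx]

theorem ComputablePred.computable_nthTransfer (hp : ComputablePred p) (hq : ComputablePred q)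
    (hq_inf : (Set.ofPred q).Infinite) (hq_inf' : (Set.ofPred fun x => ¬q x).Infinite) :
    Computable (nthTransfer p q) :=
  ComputablePred.ite ((hq.computable_nth hq_inf).comp hp.computable_count)
    ((hq.not.computable_nth hq_inf').comp hp.not.computable_count) hp

end CountNth

theorem exists_computable_equiv_nth {p q : ℕ → Prop} (hp : ComputablePred p)
    (hq : ComputablePred q) (hp_inf : (Set.ofPred p).Infinite)
    (hp_inf' : (Set.ofPred fun x => ¬p x).Infinite) (hq_inf : (Set.ofPred q).Infinite)
    (hq_inf' : (Set.ofPred fun x => ¬q x).Infinite) :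
    ∃ π : ℕ ≃ ℕ, Computable (π : ℕ → ℕ) ∧ Computable (π.symm : ℕ → ℕ) ∧
      ∀ k, π (nth p k) = nth q k := by
  classical
  exact ⟨⟨nthTransfer p q, nthTransfer q p, nthTransfer_nthTransfer hq_inf hq_inf',
      nthTransfer_nthTransfer hp_inf hp_inf'⟩,
    hp.computable_nthTransfer hq hq_inf hq_inf', hq.computable_nthTransfer hp hp_inf hp_inf',
    nthTransfer_nth hp_inf⟩

theorem exists_computable₂_leftInverse_of_strictMono {α : Type*} [Primcodable α]
    {h : α → ℕ → ℕ} (hh : Computable₂ h) (hm : ∀ a, StrictMono (h a)) :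
    ∃ r : α → ℕ → ℕ, Computable₂ r ∧ ∀ a k, r a (h a k) = k := by
  have hex : ∀ ax : α × ℕ, ∃ k, ax.2 ≤ h ax.1 k := fun ax => ⟨ax.2, (hm ax.1).le_apply⟩
  refine ⟨fun a x => Nat.find (hex (a, x)), Computable.find ?_ hex, fun a k => ?_⟩
  · exact Computable.computablePred (Primrec.nat_le.decide.to_comp.comp
      (Computable.snd.comp Computable.fst)
      (hh.comp (Computable.fst.comp Computable.fst) Computable.snd))
  · exact (Nat.find_eq_iff _).2 ⟨le_rfl, fun j hj => ((hm a).lt_iff_lt.2 hj).not_ge⟩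

theorem computablePred_mem_range_of_strictMono {g : ℕ → ℕ} (hg : Computable g)
    (hm : StrictMono g) : ComputablePred (· ∈ Set.range g) := by
  obtain ⟨r, hr, hrg⟩ := exists_computable₂_leftInverse_of_strictMono
    (h := fun (_ : Unit) => g) (hg.comp Computable.snd).to₂ fun _ => hm
  refine (Computable.computablePred (Primrec.eq.decide.to_comp.comp
    (hg.comp (hr.comp (Computable.const ()) Computable.id)) Computable.id)).of_eq fun x => ?_
  exact ⟨fun h => ⟨_, h⟩, by rintro ⟨k, rfl⟩; simp only [id, hrg]⟩

theorem StrictMono.nth_mem_range_eq {g : ℕ → ℕ} (hm : StrictMono g) :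
    nth (· ∈ Set.range g) = g := by
  ext n
  have := Nat.nth_comp_of_strictMono (p := (· ∈ Set.range g)) (n := n) hm (fun _ => id)
    (fun hfin => absurd hfin (Set.infinite_range_of_injective hm.injective))
  simpa using this.symm

theorem exists_subset_computablePred_infinite_diff_infinite {E : Set ℕ}
    (hE : ComputablePred (· ∈ E)) (hinf : E.Infinite) :
    ∃ D ⊆ E, ComputablePred (· ∈ D) ∧ D.Infinite ∧ (E \ D).Infinite := by
  have hmono : StrictMono (nth (· ∈ E)) := Nat.nth_strictMono hinf
  have heven : StrictMono fun k => nth (· ∈ E) (2 * k) := hmono.comp fun a b h => by omega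
  refine ⟨Set.range fun k => nth (· ∈ E) (2 * k), ?_, ?_, ?_, ?_⟩
  · rintro _ ⟨k, rfl⟩
    exact Nat.nth_mem_of_infinite hinf _
  · classical
    exact computablePred_mem_range_of_strictMono
      ((hE.computable_nth hinf).comp (Primrec.nat_mul.to_comp.comp (Computable.const 2)
        Computable.id)) heven
  · exact Set.infinite_range_of_injective heven.injective
  · refine Set.infinite_of_injective_forall_mem (f := fun k => nth (· ∈ E) (2 * k + 1))
      (hmono.injective.comp fun a b h => by omega) fun k => ⟨Nat.nth_mem_of_infinite hinf _, ?_⟩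
    rintro ⟨j, hj⟩
    have := hmono.injective hj
    omega

theorem encode_comp_mod_four (a b : Code) : encode (Code.comp a b) % 4 = 2 := by
  simp only [encodeCode_eq, encodeCode]
  omega

theorem encode_const_strictMono : StrictMono fun n => encode (Code.const n) :=
  strictMono_nat_of_lt_succ fun n => (encode_lt_comp Code.succ (Code.const n)).2

theorem encode_curry_strictMono (c : Code) : StrictMono fun n => encode (curry c n) := by
  intro m n hmn
  have h := Nat.pair_lt_pair_left (encode Code.id) (encode_const_strictMono hmn)
  simp only [curry, encodeCode_eq, encodeCode] at h ⊢
  have := Nat.pair_lt_pair_right (encodeCode c)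
    (show 2 * (2 * Nat.pair (encodeCode (Code.const m)) (encodeCode Code.id)) + 4 <
      2 * (2 * Nat.pair (encodeCode (Code.const n)) (encodeCode Code.id)) + 4 by omega)
  omega

theorem exists_code_dom_curry_eq_image {σ : Type*} [Primcodable σ] {f : ℕ →. σ}
    (hf : Partrec f) :
    ∃ c : Code, ∀ n, (eval (curry c n)).Dom = (fun k => encode (curry c k)) '' f.Dom := by
  obtain ⟨r, hr, hrk⟩ := exists_computable₂_leftInverse_of_strictMono
    (Computable.encode.comp₂ primrec₂_curry.to_comp) encode_curry_strictMono
  -- on input `x`, look up the only possible index `k = r c x` and run `f k`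
  let F : Code → ℕ →. ℕ := fun c y =>
    bif decide (encode (curry c (r c y.unpair.2)) = y.unpair.2) then
      (f (r c y.unpair.2)).map fun _ => 0 else Part.none
  have hF : Partrec₂ F := by
    have hx : Computable fun cy : Code × ℕ => cy.2.unpair.2 :=
      Computable.snd.comp (Computable.unpair.comp Computable.snd)
    have hk : Computable fun cy : Code × ℕ => r cy.1 cy.2.unpair.2 := hr.comp Computable.fst hx
    exact Partrec.cond (Primrec.eq.decide.to_comp.comp
        (Computable.encode.comp (primrec₂_curry.to_comp.comp Computable.fst hk)) hx)
      ((hf.comp hk).map (Computable.const 0).to₂) Partrec.none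
  obtain ⟨c, hc⟩ := fixed_point₂ hF
  refine ⟨c, fun n => Set.ext fun x => ?_⟩
  change (eval (curry c n) x).Dom ↔ _
  rw [eval_curry, hc]
  constructor
  · intro hx
    by_cases h : encode (curry c (r c x)) = x
    · simp only [F, Nat.unpair_pair, h, decide_true, cond_true, Part.map_Dom] at hx
      exact ⟨r c x, hx, h⟩
    · simp [F, h] at hx
  · rintro ⟨k, hk, rfl⟩
    simpa [F, hrk, Part.dom_iff_mem] using hk

theorem W_encode (c : Code) : W (encode c) = (eval c).Dom := by
  simp [W, phi]

theorem infinite_compl_range_encode_curry (c : Code) :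
    (Set.range fun n => encode (curry c n))ᶜ.Infinite := by
  refine Set.infinite_of_injective_forall_mem (f := fun k => 4 * k)
    (fun a b h => by simpa using h) fun k ⟨n, hn⟩ => ?_
  have := encode_comp_mod_four c (Code.pair (Code.const n) Code.id)
  simp only [curry] at hn
  omega

theorem exists_infinite_computablePred_forall_W_eq_empty :
    ∃ S : Set ℕ, S.Infinite ∧ ComputablePred (· ∈ S) ∧ ∀ e ∈ S, W e = ∅ := by
  obtain ⟨c, hc⟩ := exists_code.1 Nat.Partrec.none
  refine ⟨Set.range fun n => encode (curry c n),
    Set.infinite_range_of_injective (encode_curry_strictMono c).injective,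
    computablePred_mem_range_of_strictMono
      (Computable.encode.comp (primrec₂_curry.to_comp.comp (Computable.const c) Computable.id))
      (encode_curry_strictMono c), ?_⟩
  rintro _ ⟨n, rfl⟩
  ext x
  simp [W_encode, eval_curry, hc]

theorem SelfConstructing.disjoint_of_forall_W_eq_empty {A S : Set ℕ} (hA : SelfConstructing A)
    (hS : ∀ e ∈ S, W e = ∅) : Disjoint A S :=
  Set.disjoint_left.2 fun e heA heS => hA.1.ne_empty ((hA.2.2 e heA).symm.trans (hS e heS))

theorem exists_computable_equiv_image_selfConstructing {B E : Set ℕ} (hB : CE B)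
    (hne : B.Nonempty) (hE : ComputablePred (· ∈ E)) (hE_inf : E.Infinite)
    (hBE : Disjoint B E) :
    ∃ π : ℕ ≃ ℕ, Computable (π : ℕ → ℕ) ∧ Computable (π.symm : ℕ → ℕ) ∧
      ∃ A : Set ℕ, SelfConstructing A ∧ (π : ℕ → ℕ) '' A = B := by
  classical
  obtain ⟨D, hDE, hD, hD_inf, hED_inf⟩ :=
    exists_subset_computablePred_infinite_diff_infinite hE hE_inf
  have hBC : B ⊆ Dᶜ := fun b hb hbD => Set.disjoint_left.1 hBE hb (hDE hbD)
  have hC_inf : Dᶜ.Infinite := hED_inf.mono fun x hx => hx.2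
  have hB_range : B ⊆ Set.range (nth (· ∈ Dᶜ)) := hBC.trans Nat.subset_range_nth
  obtain ⟨eB, rfl⟩ := hB
  obtain ⟨c, hc⟩ := exists_code_dom_curry_eq_image (f := fun k => phi eB (nth (· ∈ Dᶜ) k))
    (eval_part.comp (Computable.const _) (hD.not.computable_nth hC_inf))
  set g : ℕ → ℕ := fun n => encode (curry c n)
  have hg : Computable g :=
    Computable.encode.comp (primrec₂_curry.to_comp.comp (Computable.const c) Computable.id)
  have hWg : ∀ n, W (g n) = g '' (nth (· ∈ Dᶜ) ⁻¹' W eB) := fun n => by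
    rw [W_encode, hc]
    rfl
  obtain ⟨π, hπ, hπ', hπg⟩ := exists_computable_equiv_nth (p := (· ∈ Set.range g))
    (q := (· ∈ Dᶜ)) (computablePred_mem_range_of_strictMono hg (encode_curry_strictMono c))
    hD.not (Set.infinite_range_of_injective (encode_curry_strictMono c).injective)
    (infinite_compl_range_encode_curry c) hC_inf (by simpa using hD_inf)
  rw [(encode_curry_strictMono c).nth_mem_range_eq] at hπg
  refine ⟨π, hπ, hπ', _, ⟨?_, ⟨g 0, hWg 0⟩, ?_⟩, ?_⟩
  · obtain ⟨b, hb⟩ := hne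
    obtain ⟨k, rfl⟩ := hB_range hb
    exact ⟨g k, k, hb, rfl⟩
  · rintro _ ⟨k, -, rfl⟩
    exact hWg k
  · rw [← Set.image_comp, show ⇑π ∘ g = nth (· ∈ Dᶜ) from funext hπg]
    exact Set.image_preimage_eq_of_subset hB_range

theorem stmt_10 (B : Set ℕ) (hB : CE B) (hne : B.Nonempty) :
    (∃ E : Set ℕ, E.Infinite ∧ ComputablePred (· ∈ E) ∧ Disjoint B E) ↔
    (∃ π : ℕ ≃ ℕ, Computable (π : ℕ → ℕ) ∧ Computable (π.symm : ℕ → ℕ) ∧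
      ∃ A : Set ℕ, SelfConstructing A ∧ (π : ℕ → ℕ) '' A = B) := by
  constructor
  · rintro ⟨E, hE_inf, hE, hBE⟩
    exact exists_computable_equiv_image_selfConstructing hB hne hE hE_inf hBE
  · rintro ⟨π, -, hπ', A, hA, rfl⟩
    obtain ⟨S, hS_inf, hS, hS_empty⟩ := exists_infinite_computablePred_forall_W_eq_empty
    refine ⟨π '' S, hS_inf.image π.injective.injOn, ?_,
      (Set.disjoint_image_iff π.injective).2 (hA.disjoint_of_forall_W_eq_empty hS_empty)⟩
    exact ComputablePred.computable_of_manyOneReducible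
      ⟨π.symm, hπ', fun x => by simp [Equiv.image_eq_preimage_symm]⟩ hS
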